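/- For every integer k ≥ 3, the Kelly example 𝒦_k contains the standard example S_k as a subposet; specifically, the k pairs (c_1,d_1), (a_2,b_2), …, (a_{k−1},b_{k−1}), (d_{k−1},c_{k−1}) of elements of 𝒦_k induce a subposet isomorphic to S_k (the first coordinates playing the roles of a_1,…,a_k of S_k and the second coordinates the roles of b_1,…,b_k). -/

import Mathlib

/-! ### Poset dimension and Boolean dimension -/

/-- The (Dushnik–Miller) dimension of a poset: the least `d` such that the order
is the intersection of `d` linear orders on `X`. -/
noncomputable def posetDim (X : Type*) [PartialOrder X] : ℕ :=
  sInf {d : ℕ | ∃ L : Fin d → X → X → Prop,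
    (∀ i, IsLinearOrder X (L i)) ∧ ∀ x y : X, x ≤ y ↔ ∀ i, L i x y}

/-- `(X,≤)` has a Boolean realizer of size `b`: linear orders `L 0, …, L (b-1)` and a
decoder `f` such that for distinct `x y`, `x ≤ y` iff `f` of the vector of truth values
`L i x y` holds.  Boolean dimension at most `b` is equivalent to this. -/
def hasBoolRealizer (X : Type*) [PartialOrder X] (b : ℕ) : Prop :=
  ∃ (L : Fin b → X → X → Prop) (f : (Fin b → Prop) → Prop),
    (∀ i, IsLinearOrder X (L i)) ∧
    ∀ x y : X, x ≠ y → (x ≤ y ↔ f (fun i => L i x y))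

/-! ### Standard examples -/

/-- The order of the standard example `S_k`: elements `a_i = inl i`, `b_j = inr j`,
with `a_i < b_j` iff `i ≠ j` and no other strict comparabilities. -/
def stdLE (k : ℕ) : Fin k ⊕ Fin k → Fin k ⊕ Fin k → Prop
  | Sum.inl i, Sum.inl j => i = j
  | Sum.inr i, Sum.inr j => i = j
  | Sum.inl i, Sum.inr j => i ≠ j
  | Sum.inr _, Sum.inl _ => False

/-- `X` contains the standard example `S_k` as a subposet. -/
def ContainsStd (X : Type*) [PartialOrder X] (k : ℕ) : Prop :=
  ∃ φ : Fin k ⊕ Fin k → X, Function.Injective φ ∧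
    ∀ p q, stdLE k p q ↔ φ p ≤ φ q

/-! ### Kelly examples -/

/-- Index type for the elements of the Kelly example `𝒦_k`:
`inl (inl j)` is `a_{j+2}`, `inl (inr j)` is `b_{j+2}`,
`inr (inl i)` is `c_{i+1}`, `inr (inr i)` is `d_{i+1}`. -/
abbrev KellyIdx (k : ℕ) := (Fin (k - 2) ⊕ Fin (k - 2)) ⊕ (Fin (k - 1) ⊕ Fin (k - 1))

/-- Generating strict relations of the Kelly example `𝒦_k` (in actual indices:
`a_2,…,a_i < c_i`; `c_i < b_{i+1},…,b_{k-1}`; `a_{i+1},…,a_{k-1} < d_i`;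
`d_i < b_2,…,b_i`; the chains `c_1 < ⋯ < c_{k-1}` and `d_1 > ⋯ > d_{k-1}`). -/
def kellyGen (k : ℕ) : KellyIdx k → KellyIdx k → Prop
  | Sum.inl (Sum.inl j), Sum.inr (Sum.inl i) => (j : ℕ) + 1 ≤ (i : ℕ)
  | Sum.inr (Sum.inl i), Sum.inl (Sum.inr j) => (i : ℕ) ≤ (j : ℕ)
  | Sum.inl (Sum.inl j), Sum.inr (Sum.inr i) => (i : ℕ) ≤ (j : ℕ)
  | Sum.inr (Sum.inr i), Sum.inl (Sum.inr j) => (j : ℕ) + 1 ≤ (i : ℕ)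
  | Sum.inr (Sum.inl i), Sum.inr (Sum.inl i') => (i : ℕ) < (i' : ℕ)
  | Sum.inr (Sum.inr i), Sum.inr (Sum.inr i') => (i' : ℕ) < (i : ℕ)
  | _, _ => False

/-- The order of the Kelly example `𝒦_k`: the reflexive-transitive closure of the
generating relations. -/
def kellyLE (k : ℕ) : KellyIdx k → KellyIdx k → Prop :=
  Relation.ReflTransGen (kellyGen k)

/-- `X` contains the Kelly example `𝒦_k` as a subposet. -/
def ContainsKelly (X : Type*) [PartialOrder X] (k : ℕ) : Prop :=
  ∃ φ : KellyIdx k → X, Function.Injective φ ∧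
    ∀ p q, kellyLE k p q ↔ φ p ≤ φ q

/-! ### Cover graphs, minors, tree decompositions -/

/-- `y` covers `x` with respect to the relation `r`. -/
def coverAdjOf {V : Type*} (r : V → V → Prop) (x y : V) : Prop :=
  x ≠ y ∧ r x y ∧ ∀ z, r x z → r z y → z = x ∨ z = y

/-- The cover graph of the relation `r` (for a partial order `r`, vertices are joined
iff one covers the other). -/
def coverGraphOf {V : Type*} (r : V → V → Prop) : SimpleGraph V where
  Adj x y := coverAdjOf r x y ∨ coverAdjOf r y x
  symm := ⟨fun _ _ h => Or.symm h⟩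
  loopless := ⟨fun _ h => by rcases h with h | h <;> exact h.1 rfl⟩

/-- `H` is a minor of `G`: there is a model of `H` in `G`, i.e. pairwise disjoint
branch sets inducing connected subgraphs, joined by edges of `G` for each edge of `H`. -/
def GraphIsMinor {V W : Type*} (H : SimpleGraph V) (G : SimpleGraph W) : Prop :=
  ∃ M : V → Set W,
    (∀ x, (G.induce (M x)).Connected) ∧
    (∀ x y, x ≠ y → Disjoint (M x) (M y)) ∧
    (∀ x y, H.Adj x y → ∃ a ∈ M x, ∃ b ∈ M y, G.Adj a b)

/-- A tree decomposition of the graph `G` with nodes `ν`. -/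
structure TreeDecomp {V : Type*} (G : SimpleGraph V) (ν : Type*) where
  tree : SimpleGraph ν
  isTree : tree.IsTree
  bag : ν → Set V
  bag_connected : ∀ v : V, (tree.induce {u | v ∈ bag u}).Connected
  bag_edge : ∀ x y : V, G.Adj x y → ∃ u, x ∈ bag u ∧ y ∈ bag u

/-- `G` has treewidth at most `w`: it has a tree decomposition all of whose bags
have at most `w + 1` elements. -/
def treewidthLE {V : Type*} (G : SimpleGraph V) (w : ℕ) : Prop :=
  ∃ (ν : Type) (td : TreeDecomp G ν), ∀ u, (td.bag u).ncard ≤ w + 1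

/-! ### Binary trees via positions -/

/-- A binary tree with leaves labelled by `X`. -/
inductive BTree (X : Type*) where
  | leaf (x : X)
  | node (l r : BTree X)

namespace BTree

/-- The subtree of `t` at position `p` (`false` = go left, `true` = go right). -/
def subtreeAt {X : Type*} : BTree X → List Bool → Option (BTree X)
  | t, [] => some t
  | leaf _, _ :: _ => none
  | node l r, b :: p => subtreeAt (if b then r else l) p

/-- `p` is a valid position (node) of `t`. -/
def IsPos {X : Type*} (t : BTree X) (p : List Bool) : Prop :=
  (t.subtreeAt p).isSome

/-- `p` is an inner node of `t` (neither the root nor a leaf). -/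
def IsInner {X : Type*} (t : BTree X) (p : List Bool) : Prop :=
  p ≠ [] ∧ ∃ l r : BTree X, t.subtreeAt p = some (node l r)

/-- The multiset of leaf labels of `t`. -/
def leaves {X : Type*} : BTree X → Multiset X
  | leaf x => {x}
  | node l r => leaves l + leaves r

end BTree

/-- Longest common prefix of two positions: the position of the lowest common
ancestor of the two nodes. -/
def lcp : List Bool → List Bool → List Bool
  | a :: as, b :: bs => if a = b then a :: lcp as bs else []
  | _, _ => []

/-! ### NLC-decompositions -/

/-- An NLC-decomposition of the finite poset `(X, ≤)` with label set `Q`: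
a binary tree with leaf set exactly `X`, initial labels `init`, relabelings
`rel u v : Q → Q` for `u` a strict ancestor of `v` satisfying the composition law,
and status relations `R`, `R'` encoding the order at lowest common ancestors. -/
structure NLCDecomp (X : Type*) [PartialOrder X] [Fintype X] (Q : Type*) where
  tree : BTree X
  pos : X → List Bool
  pos_spec : ∀ x, tree.subtreeAt (pos x) = some (BTree.leaf x)
  leaves_eq : tree.leaves = (Finset.univ : Finset X).val
  init : X → Q
  rel : List Bool → List Bool → Q → Q
  rel_comp : ∀ u v w : List Bool, tree.IsPos w →
    u <+: v → u ≠ v → v <+: w → v ≠ w →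
    ∀ γ : Q, rel u v (rel v w γ) = rel u w γ
  R : List Bool → Set (Q × Q)
  R' : List Bool → Set (Q × Q)
  encode : ∀ x y : X, x ≠ y →
    (lcp (pos x) (pos y) ++ [false]) <+: pos x →
    (lcp (pos x) (pos y) ++ [true]) <+: pos y →
    ((x ≤ y ↔ (rel (lcp (pos x) (pos y)) (pos x) (init x),
               rel (lcp (pos x) (pos y)) (pos y) (init y)) ∈ R (lcp (pos x) (pos y))) ∧
     (y ≤ x ↔ (rel (lcp (pos x) (pos y)) (pos y) (init y),
               rel (lcp (pos x) (pos y)) (pos x) (init x)) ∈ R' (lcp (pos x) (pos y))))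

namespace NLCDecomp

variable {X Q : Type*} [PartialOrder X] [Fintype X]

/-- The label `ℓ(u,x)` of the leaf `x` at its ancestor `u`. -/
def lab (D : NLCDecomp X Q) (u : List Bool) (x : X) : Q :=
  if u = D.pos x then D.init x else D.rel u (D.pos x) (D.init x)

/-- The set `L≤(x,v)` of labels `γ` such that `x ≤ γ` at `v`, for `x ∉ X(v)`. -/
def Lle (D : NLCDecomp X Q) (x : X) (v : List Bool) : Set Q :=
  { γ | ((lcp (D.pos x) v ++ [false]) <+: D.pos x ∧
          (D.lab (lcp (D.pos x) v) x, D.rel (lcp (D.pos x) v) v γ) ∈ D.R (lcp (D.pos x) v)) ∨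
        (¬ (lcp (D.pos x) v ++ [false]) <+: D.pos x ∧
          (D.rel (lcp (D.pos x) v) v γ, D.lab (lcp (D.pos x) v) x) ∈ D.R' (lcp (D.pos x) v)) }

/-- The set `L≥(x,v)` of labels `γ` such that `x ≥ γ` at `v`, for `x ∉ X(v)`. -/
def Lge (D : NLCDecomp X Q) (x : X) (v : List Bool) : Set Q :=
  { γ | ((lcp (D.pos x) v ++ [false]) <+: D.pos x ∧
          (D.lab (lcp (D.pos x) v) x, D.rel (lcp (D.pos x) v) v γ) ∈ D.R' (lcp (D.pos x) v)) ∨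
        (¬ (lcp (D.pos x) v ++ [false]) <+: D.pos x ∧
          (D.rel (lcp (D.pos x) v) v γ, D.lab (lcp (D.pos x) v) x) ∈ D.R (lcp (D.pos x) v)) }

end NLCDecomp

/-- `X` has NLC-width at most `q`. -/
def nlcWidthLE (X : Type*) [PartialOrder X] [Fintype X] (q : ℕ) : Prop :=
  ∃ m : ℕ, m ≤ q ∧ Nonempty (NLCDecomp X (Fin m))

/-! ### Splits, h-neighbors, h-chains, h-crosses -/

/-- `u` and `v` are `h`-neighbors with respect to the split `s`. -/
def HNbr {X Q : Type*} [PartialOrder X] [Fintype X] (D : NLCDecomp X Q)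
    (s : List Bool → ℕ) (h : ℕ) (u v : List Bool) : Prop :=
  D.tree.IsInner u ∧ D.tree.IsInner v ∧ u <+: v ∧ u ≠ v ∧ s u = h ∧ s v = h ∧
    ∀ w, u <+: w → w <+: v → w ≠ u → w ≠ v → s w ≤ h

/-- `s` is a decent split of order `p`: it maps inner nodes into `[p]` and is
forward Ramseyan with respect to the relabeling assignment of `D`. -/
def DecentSplit {X Q : Type*} [PartialOrder X] [Fintype X] (D : NLCDecomp X Q)
    (s : List Bool → ℕ) (p : ℕ) : Prop :=
  (∀ u, D.tree.IsInner u → 1 ≤ s u ∧ s u ≤ p) ∧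
  (∀ h u v u' v', HNbr D s h u v → HNbr D s h u' v' →
    ∀ γ : Q, D.rel u v (D.rel u' v' γ) = D.rel u v γ)

/-- The set `E_h` of relabelings between `h`-neighbors. -/
def Eh {X Q : Type*} [PartialOrder X] [Fintype X] (D : NLCDecomp X Q)
    (s : List Bool → ℕ) (h : ℕ) : Set (Q → Q) :=
  { σ | ∃ u v, HNbr D s h u v ∧ σ = D.rel u v }

/-- `A` is an `E_h`-class (an equivalence class of `α ≡_h β ⇔ ∀ σ ∈ E_h, σ α = σ β`). -/
def IsEhClass {X Q : Type*} [PartialOrder X] [Fintype X] (D : NLCDecomp X Q)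
    (s : List Bool → ℕ) (h : ℕ) (A : Set Q) : Prop :=
  ∃ α : Q, A = { β : Q | ∀ σ ∈ Eh D s h, σ β = σ α }

/-- `c 0, c 1, …, c ℓ` is an `h`-chain of length `ℓ`: mutual `h`-neighbors,
each a strict ancestor of the next. -/
def IsHChain {X Q : Type*} [PartialOrder X] [Fintype X] (D : NLCDecomp X Q)
    (s : List Bool → ℕ) (h ℓ : ℕ) (c : ℕ → List Bool) : Prop :=
  ∀ i j : ℕ, i < j → j ≤ ℓ → HNbr D s h (c i) (c j)

/-- There exists an `h`-cross. -/
def HCross {X Q : Type*} [PartialOrder X] [Fintype X] (D : NLCDecomp X Q)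
    (s : List Bool → ℕ) (h : ℕ) : Prop :=
  ∃ (u v : List Bool) (x y : X) (σ : Q → Q),
    HNbr D s h u v ∧
    u <+: D.pos x ∧ ¬ v <+: D.pos x ∧
    u <+: D.pos y ∧ ¬ v <+: D.pos y ∧
    ¬ x ≤ y ∧ ¬ y ≤ x ∧
    σ ∈ Eh D s h ∧
    σ (D.lab u x) ∈ D.Lge y v ∧ σ (D.lab u y) ∈ D.Lle x v

/-! ### Rooted trees (general), consistent orders, semigroup labelings -/

/-- A rooted tree on the node set `ν`, given by its parent function. -/
structure ParentTree (ν : Type*) where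
  root : ν
  parent : ν → ν
  parent_root : parent root = root
  reach : ∀ v, ∃ n : ℕ, parent^[n] v = root

namespace ParentTree

/-- `u` is an ancestor of `v` (allowing `u = v`). -/
def Anc {ν : Type*} (T : ParentTree ν) (u v : ν) : Prop :=
  ∃ n : ℕ, T.parent^[n] v = u

/-- `v` is a leaf of `T`. -/
def IsLeaf {ν : Type*} (T : ParentTree ν) (v : ν) : Prop :=
  ∀ w, T.parent w = v → w = v

/-- `u` is the lowest common ancestor of `x` and `y`. -/
def IsLCA {ν : Type*} (T : ParentTree ν) (u x y : ν) : Prop :=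
  T.Anc u x ∧ T.Anc u y ∧ ∀ w, T.Anc w x → T.Anc w y → T.Anc w u

end ParentTree

/-- The linear order `r` on the leaf set (through `ι : Z → ν`) is consistent with the
tree `T`: the leaves below any node form a contiguous interval of `r`. -/
def ConsistentOrder {ν Z : Type*} (T : ParentTree ν) (ι : Z → ν) (r : Z → Z → Prop) : Prop :=
  IsLinearOrder Z r ∧ ∀ u : ν, ∀ a b c : Z, r a b → r b c →
    T.Anc u (ι a) → T.Anc u (ι c) → T.Anc u (ι b)

/-- `lam` is a `(Λ,·)`-labeling of the rooted tree `T`. -/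
def SGLabeling {ν Λ : Type*} [Mul Λ] (T : ParentTree ν) (lam : ν → ν → Λ) : Prop :=
  ∀ u v w, T.Anc u v → u ≠ v → T.Anc v w → v ≠ w → lam u v * lam v w = lam u w

/-! ### Rooted (binary) tree decompositions -/

/-- A tree decomposition of `G` over a binary tree whose leaf set is exactly the
vertex set of `G`; nodes are positions, bags are attached to positions, and the
connectivity condition is expressed via paths in the tree. -/
structure BTreeDecomp (X : Type*) [Fintype X] (G : SimpleGraph X) where
  tree : BTree X
  pos : X → List Bool
  pos_spec : ∀ x, tree.subtreeAt (pos x) = some (BTree.leaf x)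
  leaves_eq : tree.leaves = (Finset.univ : Finset X).val
  bag : List Bool → Set X
  bag_nonempty : ∀ x : X, ∃ p, tree.IsPos p ∧ x ∈ bag p
  bag_path : ∀ x : X, ∀ p q r : List Bool, tree.IsPos p → tree.IsPos q →
    x ∈ bag p → x ∈ bag q → lcp p q <+: r → (r <+: p ∨ r <+: q) → x ∈ bag r
  bag_edge : ∀ x y : X, G.Adj x y → ∃ p, tree.IsPos p ∧ x ∈ bag p ∧ y ∈ bag p

/-! ### Alternating cycles -/

/-- `(x 0, y 0), …, (x (m-1), y (m-1))` is a (strict) alternating cycle: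
the pairs are incomparable, `x i ≤ y (i+1 mod m)`, and these are the only
comparabilities among the listed elements. -/
def IsAltCycle {X : Type*} [PartialOrder X] (m : ℕ) (x y : ℕ → X) : Prop :=
  2 ≤ m ∧
  (∀ i < m, ¬ x i ≤ y i ∧ ¬ y i ≤ x i) ∧
  (∀ i < m, x i ≤ y ((i + 1) % m)) ∧
  (∀ i < m, ∀ j < m, x i ≤ y j → j = (i + 1) % m) ∧
  (∀ i < m, ∀ j < m, x i ≤ x j → x i = x j) ∧
  (∀ i < m, ∀ j < m, y i ≤ y j → y i = y j) ∧
  (∀ i < m, ∀ j < m, y i ≤ x j → y i = x j)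

/-!
The transitive closure of the generating relations of `𝒦_k` adds, besides reflexivity, only the
comparabilities `a_i < b_j` for `i ≠ j` (through `c_i` if `i < j`, through `d_{i-1}` if `i > j`).
So the order of `𝒦_k` has an explicit closed form, in which checking that the `k` chosen pairs
span a copy of `S_k` is a comparison of indices.
-/

def kellyClosedLE (k : ℕ) : KellyIdx k → KellyIdx k → Prop
  | Sum.inl (Sum.inl j), Sum.inl (Sum.inl j') => (j : ℕ) = (j' : ℕ)
  | Sum.inl (Sum.inl j), Sum.inl (Sum.inr j') => (j : ℕ) ≠ (j' : ℕ)
  | Sum.inl (Sum.inl j), Sum.inr (Sum.inl i) => (j : ℕ) + 1 ≤ (i : ℕ)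
  | Sum.inl (Sum.inl j), Sum.inr (Sum.inr i) => (i : ℕ) ≤ (j : ℕ)
  | Sum.inl (Sum.inr j), Sum.inl (Sum.inr j') => (j : ℕ) = (j' : ℕ)
  | Sum.inr (Sum.inl i), Sum.inl (Sum.inr j) => (i : ℕ) ≤ (j : ℕ)
  | Sum.inr (Sum.inl i), Sum.inr (Sum.inl i') => (i : ℕ) ≤ (i' : ℕ)
  | Sum.inr (Sum.inr i), Sum.inl (Sum.inr j) => (j : ℕ) + 1 ≤ (i : ℕ)
  | Sum.inr (Sum.inr i), Sum.inr (Sum.inr i') => (i' : ℕ) ≤ (i : ℕ)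
  | _, _ => False

section KellyOrder

variable {k : ℕ}

lemma kellyClosedLE_refl (p : KellyIdx k) : kellyClosedLE k p p := by
  rcases p with (j | j) | (i | i) <;> simp [kellyClosedLE]

lemma kellyClosedLE.tail {p q r : KellyIdx k} (hpq : kellyClosedLE k p q)
    (hqr : kellyGen k q r) : kellyClosedLE k p r := by
  rcases p with (j | j) | (i | i) <;> rcases q with (j' | j') | (i' | i') <;>
    rcases r with (j'' | j'') | (i'' | i'') <;>
    simp only [kellyClosedLE, kellyGen] at hpq hqr ⊢ <;> omega

lemma kellyClosedLE_of_kellyLE {p q : KellyIdx k} (h : kellyLE k p q) :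
    kellyClosedLE k p q := by
  induction h with
  | refl => exact kellyClosedLE_refl p
  | tail _ hgen ih => exact ih.tail hgen

lemma kellyLE_a_b_of_ne {j j' : Fin (k - 2)} (h : (j : ℕ) ≠ j') :
    kellyLE k (Sum.inl (Sum.inl j)) (Sum.inl (Sum.inr j')) := by
  have := j'.isLt
  rcases lt_or_gt_of_ne h with hlt | hgt
  · let c : Fin (k - 1) := ⟨j + 1, by omega⟩
    exact .head (b := Sum.inr (Sum.inl c)) le_rfl (.single (show (c : ℕ) ≤ j' from hlt))
  · let d : Fin (k - 1) := ⟨j, by omega⟩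
    exact .head (b := Sum.inr (Sum.inr d)) le_rfl (.single (show (j' : ℕ) + 1 ≤ d from hgt))

lemma kellyLE_of_kellyGen_or_eq {p q : KellyIdx k} (h : kellyGen k p q ∨ p = q) :
    kellyLE k p q := by
  rcases h with h | rfl
  exacts [.single h, .refl]

lemma kellyLE_of_kellyClosedLE :
    ∀ {p q : KellyIdx k}, kellyClosedLE k p q → kellyLE k p q
  | .inl (.inl _), .inl (.inl _), h | .inl (.inr _), .inl (.inr _), h => by
    rw [Fin.ext h]; exact .refl
  | .inl (.inl _), .inl (.inr _), h => kellyLE_a_b_of_ne h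
  | .inl (.inl _), .inr (.inl _), h | .inl (.inl _), .inr (.inr _), h
  | .inr (.inl _), .inl (.inr _), h | .inr (.inr _), .inl (.inr _), h => .single h
  | .inr (.inl _), .inr (.inl _), h => kellyLE_of_kellyGen_or_eq <| by
    simpa [kellyGen, Fin.ext_iff] using h.lt_or_eq
  | .inr (.inr _), .inr (.inr _), h => kellyLE_of_kellyGen_or_eq <| by
    simpa [kellyGen, Fin.ext_iff, eq_comm] using h.lt_or_eq

theorem kellyLE_iff_kellyClosedLE {p q : KellyIdx k} :
    kellyLE k p q ↔ kellyClosedLE k p q :=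
  ⟨kellyClosedLE_of_kellyLE, kellyLE_of_kellyClosedLE⟩

end KellyOrder

lemma stdLE_antisymm {k : ℕ} {p q : Fin k ⊕ Fin k} (hpq : stdLE k p q) (hqp : stdLE k q p) :
    p = q := by
  rcases p with i | i <;> rcases q with j | j <;> simp only [stdLE] at hpq hqp
  all_goals exact congrArg _ hpq

/-- `a_1 ↦ c_1`, `a_i ↦ a_i`, `a_k ↦ d_{k-1}` and `b_1 ↦ d_1`, `b_i ↦ b_i`, `b_k ↦ c_{k-1}`. -/
def stdToKelly (k : ℕ) (hk : 3 ≤ k) : Fin k ⊕ Fin k → KellyIdx k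
  | Sum.inl i =>
    if _h0 : (i : ℕ) = 0 then Sum.inr (Sum.inl ⟨0, by omega⟩)
    else if _h1 : (i : ℕ) ≤ k - 2 then Sum.inl (Sum.inl ⟨(i : ℕ) - 1, by omega⟩)
    else Sum.inr (Sum.inr ⟨k - 2, by omega⟩)
  | Sum.inr i =>
    if _h0 : (i : ℕ) = 0 then Sum.inr (Sum.inr ⟨0, by omega⟩)
    else if _h1 : (i : ℕ) ≤ k - 2 then Sum.inl (Sum.inr ⟨(i : ℕ) - 1, by omega⟩)
    else Sum.inr (Sum.inl ⟨k - 2, by omega⟩)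

lemma stdLE_iff_kellyClosedLE_stdToKelly {k : ℕ} (hk : 3 ≤ k) (p q : Fin k ⊕ Fin k) :
    stdLE k p q ↔ kellyClosedLE k (stdToKelly k hk p) (stdToKelly k hk q) := by
  rcases p with i | i <;> rcases q with j | j <;>
    have := i.isLt <;> have := j.isLt <;>
    simp only [stdToKelly, stdLE, Fin.ext_iff] <;> split_ifs <;>
    simp only [kellyClosedLE, ne_eq, iff_false, false_iff] <;> omega

lemma stdToKelly_injective {k : ℕ} (hk : 3 ≤ k) : Function.Injective (stdToKelly k hk) := by
  intro p q h
  have hpq := (stdLE_iff_kellyClosedLE_stdToKelly hk p q).2 (h ▸ kellyClosedLE_refl _)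
  have hqp := (stdLE_iff_kellyClosedLE_stdToKelly hk q p).2 (h ▸ kellyClosedLE_refl _)
  exact stdLE_antisymm hpq hqp

theorem std_in_kelly (k : ℕ) (hk : 3 ≤ k) :
    ∃ φ : Fin k ⊕ Fin k → KellyIdx k,
      Function.Injective φ ∧
      (∀ p q, stdLE k p q ↔ kellyLE k (φ p) (φ q)) ∧
      (∀ i : Fin k, (i : ℕ) = 0 →
        φ (Sum.inl i) = Sum.inr (Sum.inl ⟨0, by omega⟩)) ∧
      (∀ i : Fin k, ∀ _h1 : 1 ≤ (i : ℕ), ∀ _h2 : (i : ℕ) ≤ k - 2,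
        φ (Sum.inl i) = Sum.inl (Sum.inl ⟨(i : ℕ) - 1, by omega⟩)) ∧
      (∀ i : Fin k, (i : ℕ) = k - 1 →
        φ (Sum.inl i) = Sum.inr (Sum.inr ⟨k - 2, by omega⟩)) ∧
      (∀ i : Fin k, (i : ℕ) = 0 →
        φ (Sum.inr i) = Sum.inr (Sum.inr ⟨0, by omega⟩)) ∧
      (∀ i : Fin k, ∀ _h1 : 1 ≤ (i : ℕ), ∀ _h2 : (i : ℕ) ≤ k - 2,
        φ (Sum.inr i) = Sum.inl (Sum.inr ⟨(i : ℕ) - 1, by omega⟩)) ∧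
      (∀ i : Fin k, (i : ℕ) = k - 1 →
        φ (Sum.inr i) = Sum.inr (Sum.inl ⟨k - 2, by omega⟩)) := by
  refine ⟨stdToKelly k hk, stdToKelly_injective hk, fun p q => ?_,
    ?_, ?_, ?_, ?_, ?_, ?_⟩
  · rw [stdLE_iff_kellyClosedLE_stdToKelly hk, kellyLE_iff_kellyClosedLE]
  all_goals intros; simp only [stdToKelly]; split_ifs <;> first | rfl | omega
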